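/- arXiv:2309.07443 — 3 statements merged into one kernel-verified Lean document; each statement's English description precedes it below -/
import Mathlib

section
/- Let n, l, p be positive integers, let λ > 0 and 0 < μ ≤ α be real numbers, let M : [0,∞) → (n×n real symmetric matrices) be differentiable, let 𝒜 : [0,∞) → ℝ^{n×n}, ℬ : [0,∞) → ℝ^{n×l}, 𝒞 : [0,∞) → ℝ^{p×n}, 𝒟 : [0,∞) → ℝ^{p×l} be matrix-valued functions, let w : [0,∞) → ℝ^l, and let x : [0,∞) → ℝ^n be differentiable with x'(t) = 𝒜(t)x(t) + ℬ(t)w(t) for all t ≥ 0; set z(t) = 𝒞(t)x(t) + 𝒟(t)w(t). Assume for every t ≥ 0: (i) the block matrix [[M(t)𝒜(t) + 𝒜(t)ᵀM(t) + M'(t) + λM(t), M(t)ℬ(t)], [ℬ(t)ᵀM(t), −μI_l]] is negative semidefinite, and (ii) the block matrix [[λM(t), 0], [0, (α−μ)I_l]] − α⁻¹·[𝒞(t) 𝒟(t)]ᵀ[𝒞(t) 𝒟(t)] is positive semidefinite. Then for every T ≥ 0 and every W ≥ 0 such that ‖w(s)‖ ≤ W for all s ∈ [0,T], one has ‖z(T)‖²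 ≤ α²W² + α·λ·e^{−λT}·x(0)ᵀM(0)x(0). -/
/-!
`V t = x tᵀ M t x t` is a storage function. Testing (i) on `(x t, w t)` gives the dissipation
inequality `V' ≤ -λ V + μ W²`, so by Grönwall `λ V T ≤ μ W² + λ e^{-λT} V 0`. Testing (ii) on
`(x T, w T)` gives `‖z T‖² ≤ α (λ V T + (α - μ) W²)`, and the two `μ W²` terms cancel to `α² W²`.
-/

open Matrix Set

noncomputable def euclNorm {ι : Type*} [Fintype ι] (v : ι → ℝ) : ℝ := Real.sqrt (v ⬝ᵥ v)

theorem euclNorm_sq {ι : Type*} [Fintype ι] (v : ι → ℝ) : euclNorm v ^ 2 = v ⬝ᵥ v :=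
  Real.sq_sqrt (by simpa using dotProduct_star_self_nonneg v)

theorem dotProduct_self_le_sq_of_euclNorm_le {ι : Type*} [Fintype ι] {v : ι → ℝ} {W : ℝ}
    (h : euclNorm v ≤ W) : v ⬝ᵥ v ≤ W ^ 2 := by
  rw [← euclNorm_sq]
  exact pow_le_pow_left₀ (Real.sqrt_nonneg _) h 2

section Derivatives

variable {m k : Type*} [Fintype m] {s : Set ℝ} {t : ℝ}

theorem HasDerivWithinAt.dotProduct {u v : ℝ → m → ℝ} {u' v' : m → ℝ}
    (hu : HasDerivWithinAt u u' s t) (hv : HasDerivWithinAt v v' s t) :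
    HasDerivWithinAt (fun r => u r ⬝ᵥ v r) (u' ⬝ᵥ v t + u t ⬝ᵥ v') s t := by
  have h := HasDerivWithinAt.fun_sum (u := Finset.univ) fun i _ =>
    (hasDerivWithinAt_pi.1 hu i).mul (hasDerivWithinAt_pi.1 hv i)
  simpa only [_root_.dotProduct, ← Finset.sum_add_distrib, Pi.mul_apply] using h

theorem HasDerivWithinAt.mulVec {A : ℝ → Matrix k m ℝ} {A' : Matrix k m ℝ} {v : ℝ → m → ℝ}
    {v' : m → ℝ} (hA : ∀ i j, HasDerivWithinAt (fun r => A r i j) (A' i j) s t)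
    (hv : HasDerivWithinAt v v' s t) :
    HasDerivWithinAt (fun r => A r *ᵥ v r) (A' *ᵥ v t + A t *ᵥ v') s t :=
  hasDerivWithinAt_pi.2 fun i => (hasDerivWithinAt_pi.2 (hA i)).dotProduct hv

end Derivatives

theorem le_gronwallBound_of_hasDerivWithinAt {f f' : ℝ → ℝ} {δ K ε a b : ℝ}
    (hf : ∀ x ∈ Icc a b, HasDerivWithinAt f (f' x) (Ici a) x)
    (ha : f a ≤ δ) (bound : ∀ x ∈ Ico a b, f' x ≤ K * f x + ε) :
    ∀ x ∈ Icc a b, f x ≤ gronwallBound δ K ε (x - a) :=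
  le_gronwallBound_of_liminf_deriv_right_le
    (fun x hx => (hf x hx).continuousWithinAt.mono Icc_subset_Ici_self)
    (fun x hx _ hr =>
      ((hf x (Ico_subset_Icc_self hx)).mono (Ici_subset_Ici.2 hx.1)).liminf_right_slope_le hr)
    ha bound

theorem gronwallBound_neg_le {δ lam ε : ℝ} (hlam : 0 < lam) (hε : 0 ≤ ε) (x : ℝ) :
    gronwallBound δ (-lam) ε x ≤ ε / lam + Real.exp (-lam * x) * δ := by
  rw [gronwallBound_of_K_ne_0 (neg_ne_zero.2 hlam.ne'), div_neg]
  have hexp := Real.exp_pos (-lam * x)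
  nlinarith [mul_nonneg (div_nonneg hε hlam.le) hexp.le]

section Blocks

variable {m k q : Type*} [Fintype m] [Fintype k] [Fintype q] [DecidableEq k]

theorem dissipation_le_of_posSemidef_neg_fromBlocks {M A M' : Matrix m m ℝ} {B : Matrix m k ℝ}
    {lam mu : ℝ}
    (h : (-(fromBlocks (M * A + Aᵀ * M + M' + lam • M) (M * B) (Bᵀ * M)
      (-(mu • (1 : Matrix k k ℝ))))).PosSemidef) (x : m → ℝ) (w : k → ℝ) :
    (A *ᵥ x + B *ᵥ w) ⬝ᵥ (M *ᵥ x) + x ⬝ᵥ (M' *ᵥ x + M *ᵥ (A *ᵥ x + B *ᵥ w))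
      + lam * (x ⬝ᵥ (M *ᵥ x)) ≤ mu * (w ⬝ᵥ w) := by
  have hquad := h.dotProduct_mulVec_nonneg (Sum.elim x w)
  rw [dotProduct_comm (A *ᵥ x + B *ᵥ w)]
  simp only [star_trivial, neg_mulVec, dotProduct_neg, fromBlocks_mulVec,
    sumElim_dotProduct_sumElim, add_mulVec, mulVec_add, dotProduct_add,
    ← mulVec_mulVec, smul_mulVec, one_mulVec, dotProduct_smul, smul_eq_mul,
    dotProduct_transpose_mulVec, Sum.elim_comp_inl, Sum.elim_comp_inr] at hquad ⊢
  linarith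

theorem dotProduct_self_le_of_posSemidef_fromBlocks_sub {M : Matrix m m ℝ} {C : Matrix q m ℝ}
    {D : Matrix q k ℝ} {lam mu alpha : ℝ} (halpha : 0 < alpha)
    (h : (fromBlocks (lam • M) 0 0 ((alpha - mu) • (1 : Matrix k k ℝ))
      - alpha⁻¹ • ((fromCols C D)ᵀ * fromCols C D)).PosSemidef) (x : m → ℝ) (w : k → ℝ) :
    (C *ᵥ x + D *ᵥ w) ⬝ᵥ (C *ᵥ x + D *ᵥ w)
      ≤ alpha * (lam * (x ⬝ᵥ (M *ᵥ x)) + (alpha - mu) * (w ⬝ᵥ w)) := by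
  have hquad := h.dotProduct_mulVec_nonneg (Sum.elim x w)
  simp only [star_trivial, sub_mulVec, dotProduct_sub, fromBlocks_mulVec,
    sumElim_dotProduct_sumElim, smul_mulVec, one_mulVec, zero_mulVec, add_zero, zero_add,
    dotProduct_smul, smul_eq_mul, ← mulVec_mulVec, dotProduct_transpose_mulVec,
    fromCols_mulVec_sumElim, Sum.elim_comp_inl, Sum.elim_comp_inr] at hquad
  rw [← inv_mul_le_iff₀ halpha]
  linarith

end Blocks

theorem universal_Linf_gain_bound_general
    (n l p : ℕ)
    (lam mu alpha : ℝ) (hlam : 0 < lam) (hmu : 0 < mu) (hmualpha : mu ≤ alpha)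
    (M M' : ℝ → Matrix (Fin n) (Fin n) ℝ)
    (hMderiv : ∀ t, 0 ≤ t → ∀ i j,
      HasDerivWithinAt (fun s => M s i j) (M' t i j) (Set.Ici (0 : ℝ)) t)
    (𝒜 : ℝ → Matrix (Fin n) (Fin n) ℝ) (ℬ : ℝ → Matrix (Fin n) (Fin l) ℝ)
    (𝒞 : ℝ → Matrix (Fin p) (Fin n) ℝ) (𝒟 : ℝ → Matrix (Fin p) (Fin l) ℝ)
    (w : ℝ → Fin l → ℝ) (x : ℝ → Fin n → ℝ)
    (hx : ∀ t, 0 ≤ t →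
      HasDerivWithinAt x (𝒜 t *ᵥ x t + ℬ t *ᵥ w t) (Set.Ici (0 : ℝ)) t)
    (z : ℝ → Fin p → ℝ) (hz : ∀ t, 0 ≤ t → z t = 𝒞 t *ᵥ x t + 𝒟 t *ᵥ w t)
    -- (i) the first block matrix is negative semidefinite
    (hineq1 : ∀ t, 0 ≤ t →
      (-(Matrix.fromBlocks
          (M t * 𝒜 t + (𝒜 t)ᵀ * M t + M' t + lam • M t) (M t * ℬ t)
          ((ℬ t)ᵀ * M t) (-(mu • (1 : Matrix (Fin l) (Fin l) ℝ))))).PosSemidef)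
    -- (ii) the second block matrix is positive semidefinite
    (hineq2 : ∀ t, 0 ≤ t →
      (Matrix.fromBlocks (lam • M t) 0 0 ((alpha - mu) • (1 : Matrix (Fin l) (Fin l) ℝ))
        - alpha⁻¹ • ((Matrix.fromCols (𝒞 t) (𝒟 t))ᵀ *
            Matrix.fromCols (𝒞 t) (𝒟 t))).PosSemidef) :
    ∀ T, 0 ≤ T → ∀ W, 0 ≤ W → (∀ s, 0 ≤ s → s ≤ T → euclNorm (w s) ≤ W) →
      euclNorm (z T) ^ 2 ≤
        alpha ^ 2 * W ^ 2 + alpha * lam * Real.exp (-lam * T) * (x 0 ⬝ᵥ (M 0 *ᵥ x 0)) := by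
  intro T hT W _ hw
  have halpha : 0 < alpha := hmu.trans_le hmualpha
  have hgap : 0 ≤ alpha - mu := sub_nonneg.2 hmualpha
  set V : ℝ → ℝ := fun t => x t ⬝ᵥ (M t *ᵥ x t)
  set V' : ℝ → ℝ := fun t => (𝒜 t *ᵥ x t + ℬ t *ᵥ w t) ⬝ᵥ (M t *ᵥ x t)
    + x t ⬝ᵥ (M' t *ᵥ x t + M t *ᵥ (𝒜 t *ᵥ x t + ℬ t *ᵥ w t))
  have hV (t : ℝ) (ht : t ∈ Icc 0 T) : HasDerivWithinAt V (V' t) (Ici 0) t :=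
    (hx t ht.1).dotProduct (HasDerivWithinAt.mulVec (hMderiv t ht.1) (hx t ht.1))
  have hdecay (t : ℝ) (ht : t ∈ Ico 0 T) : V' t ≤ -lam * V t + mu * W ^ 2 := by
    have hdiss := dissipation_le_of_posSemidef_neg_fromBlocks (hineq1 t ht.1) (x t) (w t)
    have hwt := mul_le_mul_of_nonneg_left
      (dotProduct_self_le_sq_of_euclNorm_le (hw t ht.1 ht.2.le)) hmu.le
    linarith
  have hVT : V T ≤ mu * W ^ 2 / lam + Real.exp (-lam * T) * V 0 := by
    have hgronwall := le_gronwallBound_of_hasDerivWithinAt hV le_rfl hdecay T ⟨hT, le_rfl⟩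
    rw [sub_zero] at hgronwall
    exact hgronwall.trans (gronwallBound_neg_le hlam (by positivity) T)
  have hwT := dotProduct_self_le_sq_of_euclNorm_le (hw T hT le_rfl)
  rw [hz T hT, euclNorm_sq]
  calc _ ≤ alpha * (lam * V T + (alpha - mu) * (w T ⬝ᵥ w T)) :=
        dotProduct_self_le_of_posSemidef_fromBlocks_sub halpha (hineq2 T hT) (x T) (w T)
    _ ≤ alpha * (lam * (mu * W ^ 2 / lam + Real.exp (-lam * T) * V 0)
          + (alpha - mu) * W ^ 2) := by gcongr
    _ = _ := by field_simp; ring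

/-- Lemma 1 of the paper, in linear time-varying (differential dynamics) form:
the two robust-CCM matrix inequalities certify a universal L∞ gain bound `α`
from the disturbance `w` to the output `z = 𝒞x + 𝒟w`, with offset
`β(x(0)) = α·λ·e^{-λT}·x(0)ᵀ M(0) x(0)`. -/
theorem universal_Linf_gain_bound
    (n l p : ℕ) (hn : 0 < n) (hl : 0 < l) (hp : 0 < p)
    (lam mu alpha : ℝ) (hlam : 0 < lam) (hmu : 0 < mu) (hmualpha : mu ≤ alpha)
    (M M' : ℝ → Matrix (Fin n) (Fin n) ℝ)
    (hMsymm : ∀ t, 0 ≤ t → (M t).IsSymm)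
    (hMderiv : ∀ t, 0 ≤ t → ∀ i j,
      HasDerivWithinAt (fun s => M s i j) (M' t i j) (Set.Ici (0 : ℝ)) t)
    (𝒜 : ℝ → Matrix (Fin n) (Fin n) ℝ) (ℬ : ℝ → Matrix (Fin n) (Fin l) ℝ)
    (𝒞 : ℝ → Matrix (Fin p) (Fin n) ℝ) (𝒟 : ℝ → Matrix (Fin p) (Fin l) ℝ)
    (w : ℝ → Fin l → ℝ) (x : ℝ → Fin n → ℝ)
    (hx : ∀ t, 0 ≤ t →
      HasDerivWithinAt x (𝒜 t *ᵥ x t + ℬ t *ᵥ w t) (Set.Ici (0 : ℝ)) t)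
    (z : ℝ → Fin p → ℝ) (hz : ∀ t, 0 ≤ t → z t = 𝒞 t *ᵥ x t + 𝒟 t *ᵥ w t)
    -- (i) the first block matrix is negative semidefinite
    (hineq1 : ∀ t, 0 ≤ t →
      (-(Matrix.fromBlocks
          (M t * 𝒜 t + (𝒜 t)ᵀ * M t + M' t + lam • M t) (M t * ℬ t)
          ((ℬ t)ᵀ * M t) (-(mu • (1 : Matrix (Fin l) (Fin l) ℝ))))).PosSemidef)
    -- (ii) the second block matrix is positive semidefinite
    (hineq2 : ∀ t, 0 ≤ t →
      (Matrix.fromBlocks (lam • M t) 0 0 ((alpha - mu) • (1 : Matrix (Fin l) (Fin l) ℝ))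
        - alpha⁻¹ • ((Matrix.fromCols (𝒞 t) (𝒟 t))ᵀ *
            Matrix.fromCols (𝒞 t) (𝒟 t))).PosSemidef) :
    ∀ T, 0 ≤ T → ∀ W, 0 ≤ W → (∀ s, 0 ≤ s → s ≤ T → euclNorm (w s) ≤ W) →
      euclNorm (z T) ^ 2 ≤
        alpha ^ 2 * W ^ 2 + alpha * lam * Real.exp (-lam * T) * (x 0 ⬝ᵥ (M 0 *ᵥ x 0)) :=
  universal_Linf_gain_bound_general n l p lam mu alpha hlam hmu hmualpha M M' hMderiv 𝒜 ℬ 𝒞 𝒟 w x hx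
    z hz hineq1 hineq2
end

section
/- Let E be a real normed vector space and S ⊆ E. Let λ > 0 and μ > 0. Let M, Ṁ : E → (n×n real symmetric matrices), A : E → ℝ^{n×n}, B : E → ℝ^{n×m}, K : E → ℝ^{m×n} be functions which on S are Lipschitz with constants L_M, L_{Ṁ}, L_A, L_B, L_K and bounded in spectral norm by S_M, S_A (with S_A bounding ‖A‖), S_B, S_K respectively, and let B_w ∈ ℝ^{n×l} be a fixed matrix with ‖B_w‖ ≤ S_{B_w}. Define F(s) := M(s)(A(s)+B(s)K(s)) + (M(s)(A(s)+B(s)K(s)))ᵀ + Ṁ(s) + λ·M(s) + μ⁻¹·M(s)B_w B_wᵀ M(s). Then the function s ↦ λ_max(F(s)) is Lipschitz on S with constant L_{Ṁ} + 2·(S_M L_A + S_A L_M + S_M S_B L_K + S_B S_K L_M + S_M S_K L_B + (λ/2)·L_M + μ⁻¹·S_M L_M S_{B_w}²). -/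
open Matrix Set

/-- Spectral (ℓ²-operator) norm of a real matrix. -/
noncomputable def specNorm {ι κ : Type*} [Fintype ι] [Fintype κ] [DecidableEq κ]
    (A : Matrix ι κ ℝ) : ℝ :=
  ‖LinearMap.toContinuousLinearMap (Matrix.toEuclideanLin A)‖

/-- Largest eigenvalue of a real symmetric matrix, as the supremum of the
Rayleigh quotient over the unit sphere. -/
noncomputable def lambdaMax {ι : Type*} [Fintype ι] (A : Matrix ι ι ℝ) : ℝ :=
  sSup {r : ℝ | ∃ v : ι → ℝ, euclNorm v = 1 ∧ r = v ⬝ᵥ (A *ᵥ v)}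

open scoped Matrix.Norms.L2Operator

/-! Since `lambdaMax` is a supremum of Rayleigh quotients, each bounded by the spectral norm,
it is 1-Lipschitz for the spectral norm (Weyl's inequality). It remains to bound
`‖F s - F t‖`: every product is telescoped as `X Y - X' Y' = X (Y - Y') + (X - X') Y'`, and
submultiplicativity of the spectral norm turns the uniform bounds and Lipschitz constants of the
factors into the stated constant. -/

section Rayleigh

variable {ι : Type*} [Fintype ι]

lemma euclNorm_eq_norm_toLp (v : ι → ℝ) : euclNorm v = ‖WithLp.toLp 2 v‖ := by
  rw [norm_eq_sqrt_real_inner, EuclideanSpace.inner_toLp_toLp, star_trivial, euclNorm]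

lemma lambdaMax_of_isEmpty [IsEmpty ι] (X : Matrix ι ι ℝ) : lambdaMax X = 0 := by
  have hv : ∀ v : ι → ℝ, euclNorm v ≠ 1 := by simp [euclNorm]
  simp [lambdaMax, hv]

variable [DecidableEq ι]

lemma abs_dotProduct_mulVec_le_l2_opNorm (X : Matrix ι ι ℝ) {v : ι → ℝ} (hv : euclNorm v = 1) :
    |v ⬝ᵥ (X *ᵥ v)| ≤ ‖X‖ := by
  rw [euclNorm_eq_norm_toLp] at hv
  have hCS := abs_real_inner_le_norm (WithLp.toLp 2 (X *ᵥ v)) (WithLp.toLp 2 v)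
  have hop := X.l2_opNorm_mulVec (WithLp.toLp 2 v)
  rw [EuclideanSpace.inner_toLp_toLp, star_trivial, hv] at hCS
  rw [hv] at hop
  exact hCS.trans (by simpa using hop)

lemma bddAbove_rayleigh (X : Matrix ι ι ℝ) :
    BddAbove {r : ℝ | ∃ v : ι → ℝ, euclNorm v = 1 ∧ r = v ⬝ᵥ (X *ᵥ v)} := by
  refine ⟨‖X‖, ?_⟩
  rintro r ⟨v, hv, rfl⟩
  exact le_of_abs_le (abs_dotProduct_mulVec_le_l2_opNorm X hv)

lemma lambdaMax_le_add_l2_opNorm_sub [Nonempty ι] (X Y : Matrix ι ι ℝ) :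
    lambdaMax X ≤ lambdaMax Y + ‖X - Y‖ := by
  obtain ⟨i⟩ := ‹Nonempty ι›
  have hunit : euclNorm (Pi.single i (1 : ℝ)) = 1 := by simp [euclNorm]
  refine csSup_le ⟨_, _, hunit, rfl⟩ ?_
  rintro r ⟨v, hv, rfl⟩
  have hY : v ⬝ᵥ (Y *ᵥ v) ≤ lambdaMax Y := le_csSup (bddAbove_rayleigh Y) ⟨v, hv, rfl⟩
  have hXY : v ⬝ᵥ ((X - Y) *ᵥ v) ≤ ‖X - Y‖ :=
    le_of_abs_le (abs_dotProduct_mulVec_le_l2_opNorm (X - Y) hv)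
  rw [sub_mulVec, dotProduct_sub] at hXY
  linarith

lemma abs_lambdaMax_sub_le_l2_opNorm_sub (X Y : Matrix ι ι ℝ) :
    |lambdaMax X - lambdaMax Y| ≤ ‖X - Y‖ := by
  rcases isEmpty_or_nonempty ι with _ | _
  · simp [lambdaMax_of_isEmpty]
  · rw [abs_sub_le_iff]
    constructor <;> linarith [lambdaMax_le_add_l2_opNorm_sub X Y,
      lambdaMax_le_add_l2_opNorm_sub Y X, norm_sub_rev X Y]

end Rayleigh

section ProductBounds

variable {ι κ τ : Type*} [Fintype ι] [Fintype κ] [Fintype τ] [DecidableEq κ] [DecidableEq τ]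

lemma l2_opNorm_mul_le_of_le {X : Matrix ι κ ℝ} {Y : Matrix κ τ ℝ} {a b : ℝ}
    (hX : ‖X‖ ≤ a) (hY : ‖Y‖ ≤ b) : ‖X * Y‖ ≤ a * b :=
  (l2_opNorm_mul X Y).trans (mul_le_mul hX hY (norm_nonneg _) ((norm_nonneg _).trans hX))

lemma l2_opNorm_mul_sub_mul_le {X X' : Matrix ι κ ℝ} {Y Y' : Matrix κ τ ℝ} {a b p q : ℝ}
    (hX : ‖X‖ ≤ a) (hY' : ‖Y'‖ ≤ b) (hXX' : ‖X - X'‖ ≤ p) (hYY' : ‖Y - Y'‖ ≤ q) :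
    ‖X * Y - X' * Y'‖ ≤ a * q + p * b := by
  have hsplit : X * Y - X' * Y' = X * (Y - Y') + (X - X') * Y' := by
    rw [Matrix.mul_sub, Matrix.sub_mul]; abel
  rw [hsplit]
  exact (norm_add_le _ _).trans
    (add_le_add (l2_opNorm_mul_le_of_le hX hYY') (l2_opNorm_mul_le_of_le hXX' hY'))

end ProductBounds

section SchurComplement

variable {n m l : Type*} [Fintype n] [Fintype m] [Fintype l]
  [DecidableEq n] [DecidableEq m] [DecidableEq l]

lemma l2_opNorm_closedLoop_sub_le {M M' A A' : Matrix n n ℝ} {B B' : Matrix n m ℝ}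
    {K K' : Matrix m n ℝ} {SM SA SB SK δM δA δB δK : ℝ}
    (hM : ‖M‖ ≤ SM) (hA' : ‖A'‖ ≤ SA) (hB : ‖B‖ ≤ SB) (hB' : ‖B'‖ ≤ SB) (hK' : ‖K'‖ ≤ SK)
    (hδM : ‖M - M'‖ ≤ δM) (hδA : ‖A - A'‖ ≤ δA) (hδB : ‖B - B'‖ ≤ δB) (hδK : ‖K - K'‖ ≤ δK) :
    ‖M * (A + B * K) - M' * (A' + B' * K')‖
      ≤ SM * (δA + (SB * δK + δB * SK)) + δM * (SA + SB * SK) := by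
  have hgain : ‖A' + B' * K'‖ ≤ SA + SB * SK :=
    norm_add_le_of_le hA' (l2_opNorm_mul_le_of_le hB' hK')
  have hgain_sub : ‖(A + B * K) - (A' + B' * K')‖ ≤ δA + (SB * δK + δB * SK) := by
    rw [add_sub_add_comm]
    exact norm_add_le_of_le hδA (l2_opNorm_mul_sub_mul_le hB hK' hδB hδK)
  exact l2_opNorm_mul_sub_mul_le hM hgain hδM hgain_sub

lemma l2_opNorm_sandwich_sub_le {M M' : Matrix n n ℝ} {G : Matrix n l ℝ} {SM SG δM : ℝ}
    (hM : ‖M‖ ≤ SM) (hM' : ‖M'‖ ≤ SM) (hG : ‖G‖ ≤ SG) (hδM : ‖M - M'‖ ≤ δM) :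
    ‖M * G * Gᵀ * M - M' * G * Gᵀ * M'‖ ≤ 2 * SM * SG ^ 2 * δM := by
  have hGT : ‖Gᵀ‖ ≤ SG := by
    rwa [← conjTranspose_eq_transpose_of_trivial, l2_opNorm_conjTranspose]
  have hleft : ‖M * G * Gᵀ‖ ≤ SM * SG * SG :=
    l2_opNorm_mul_le_of_le (l2_opNorm_mul_le_of_le hM hG) hGT
  have hleft_sub : ‖M * G * Gᵀ - M' * G * Gᵀ‖ ≤ δM * SG * SG := by
    rw [← Matrix.sub_mul, ← Matrix.sub_mul]
    exact l2_opNorm_mul_le_of_le (l2_opNorm_mul_le_of_le hδM hG) hGT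
  calc _ ≤ SM * SG * SG * δM + δM * SG * SG * SM :=
        l2_opNorm_mul_sub_mul_le hleft hM' hleft_sub hδM
    _ = 2 * SM * SG ^ 2 * δM := by ring

lemma l2_opNorm_schurComplement_sub_le {lam mu : ℝ} (hlam : 0 ≤ lam) (hmu : 0 ≤ mu)
    (P P' D D' M M' Q Q' : Matrix n n ℝ) :
    ‖(P + Pᵀ + D + lam • M + mu⁻¹ • Q) - (P' + P'ᵀ + D' + lam • M' + mu⁻¹ • Q')‖
      ≤ 2 * ‖P - P'‖ + ‖D - D'‖ + lam * ‖M - M'‖ + mu⁻¹ * ‖Q - Q'‖ := by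
  have hsplit : (P + Pᵀ + D + lam • M + mu⁻¹ • Q) - (P' + P'ᵀ + D' + lam • M' + mu⁻¹ • Q')
      = (P - P') + (P - P')ᵀ + (D - D') + lam • (M - M') + mu⁻¹ • (Q - Q') := by
    rw [transpose_sub, smul_sub, smul_sub]; abel
  have hT : ‖(P - P')ᵀ‖ = ‖P - P'‖ := by
    rw [← conjTranspose_eq_transpose_of_trivial, l2_opNorm_conjTranspose]
  rw [hsplit]
  refine (norm_add_le_of_le norm_add₄_le le_rfl).trans_eq ?_
  rw [hT, norm_smul, norm_smul, Real.norm_of_nonneg hlam, Real.norm_of_nonneg (inv_nonneg.2 hmu)]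
  ring

end SchurComplement

theorem prop1_first_inequality_lipschitz_general
    (n m l : ℕ) (E : Type*) [NormedAddCommGroup E] [NormedSpace ℝ E] (S : Set E)
    (lam mu : ℝ) (hlam : 0 < lam) (hmu : 0 < mu)
    (M Mdot : E → Matrix (Fin n) (Fin n) ℝ)
    (A : E → Matrix (Fin n) (Fin n) ℝ)
    (B : E → Matrix (Fin n) (Fin m) ℝ) (K : E → Matrix (Fin m) (Fin n) ℝ)
    (Bw : Matrix (Fin n) (Fin l) ℝ)
    (SM SA SB SK SBw LM LMdot LA LB LK : ℝ)
    (hMb : ∀ s ∈ S, specNorm (M s) ≤ SM) (hAb : ∀ s ∈ S, specNorm (A s) ≤ SA)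
    (hBb : ∀ s ∈ S, specNorm (B s) ≤ SB) (hKb : ∀ s ∈ S, specNorm (K s) ≤ SK)
    (hBw : specNorm Bw ≤ SBw)
    (hMl : ∀ s ∈ S, ∀ t ∈ S, specNorm (M s - M t) ≤ LM * ‖s - t‖)
    (hMdotl : ∀ s ∈ S, ∀ t ∈ S, specNorm (Mdot s - Mdot t) ≤ LMdot * ‖s - t‖)
    (hAl : ∀ s ∈ S, ∀ t ∈ S, specNorm (A s - A t) ≤ LA * ‖s - t‖)
    (hBl : ∀ s ∈ S, ∀ t ∈ S, specNorm (B s - B t) ≤ LB * ‖s - t‖)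
    (hKl : ∀ s ∈ S, ∀ t ∈ S, specNorm (K s - K t) ≤ LK * ‖s - t‖)
    (F : E → Matrix (Fin n) (Fin n) ℝ)
    (hF : ∀ s, F s = M s * (A s + B s * K s) + (M s * (A s + B s * K s))ᵀ
        + Mdot s + lam • M s + mu⁻¹ • (M s * Bw * Bwᵀ * M s)) :
    ∀ s ∈ S, ∀ t ∈ S,
      |lambdaMax (F s) - lambdaMax (F t)| ≤
        (LMdot + 2 * (SM * LA + SA * LM + SM * SB * LK + SB * SK * LM + SM * SK * LB
          + (lam / 2) * LM + mu⁻¹ * SM * LM * SBw ^ 2)) * ‖s - t‖ := by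
  intro s hs t ht
  set d := ‖s - t‖
  have hP := l2_opNorm_closedLoop_sub_le (hMb s hs) (hAb t ht) (hBb s hs) (hBb t ht) (hKb t ht)
    (hMl s hs t ht) (hAl s hs t ht) (hBl s hs t ht) (hKl s hs t ht)
  have hQ := l2_opNorm_sandwich_sub_le (hMb s hs) (hMb t ht) hBw (hMl s hs t ht)
  calc |lambdaMax (F s) - lambdaMax (F t)| ≤ ‖F s - F t‖ := abs_lambdaMax_sub_le_l2_opNorm_sub _ _
    _ ≤ 2 * ‖M s * (A s + B s * K s) - M t * (A t + B t * K t)‖ + ‖Mdot s - Mdot t‖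
          + lam * ‖M s - M t‖ + mu⁻¹ * ‖M s * Bw * Bwᵀ * M s - M t * Bw * Bwᵀ * M t‖ := by
      rw [hF s, hF t]
      exact l2_opNorm_schurComplement_sub_le hlam.le hmu.le ..
    _ ≤ 2 * (SM * (LA * d + (SB * (LK * d) + LB * d * SK)) + LM * d * (SA + SB * SK))
          + LMdot * d + lam * (LM * d) + mu⁻¹ * (2 * SM * SBw ^ 2 * (LM * d)) := by
      gcongr
      exacts [hMdotl s hs t ht, hMl s hs t ht]
    _ = _ := by ring

/-- Proposition 1 of the paper (first inequality), for the Schur complement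
`F(s) = M(A+BK) + (M(A+BK))ᵀ + Ṁ + λM + μ⁻¹ M B_w B_wᵀ M` of the block matrix
on the left-hand side of Eq. (10): its largest eigenvalue is Lipschitz with constant
`L_Ṁ + 2(S_M L_A + S_A L_M + S_M S_B L_K + S_B S_K L_M + S_M S_K L_B
 + (λ/2) L_M + μ⁻¹ S_M L_M S_{B_w}²)`. -/
theorem prop1_first_inequality_lipschitz
    (n m l : ℕ) (E : Type*) [NormedAddCommGroup E] [NormedSpace ℝ E] (S : Set E)
    (lam mu : ℝ) (hlam : 0 < lam) (hmu : 0 < mu)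
    (M Mdot : E → Matrix (Fin n) (Fin n) ℝ)
    (hMsymm : ∀ s, (M s).IsSymm) (hMdotsymm : ∀ s, (Mdot s).IsSymm)
    (A : E → Matrix (Fin n) (Fin n) ℝ)
    (B : E → Matrix (Fin n) (Fin m) ℝ) (K : E → Matrix (Fin m) (Fin n) ℝ)
    (Bw : Matrix (Fin n) (Fin l) ℝ)
    (SM SA SB SK SBw LM LMdot LA LB LK : ℝ)
    (hMb : ∀ s ∈ S, specNorm (M s) ≤ SM) (hAb : ∀ s ∈ S, specNorm (A s) ≤ SA)
    (hBb : ∀ s ∈ S, specNorm (B s) ≤ SB) (hKb : ∀ s ∈ S, specNorm (K s) ≤ SK)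
    (hBw : specNorm Bw ≤ SBw)
    (hMl : ∀ s ∈ S, ∀ t ∈ S, specNorm (M s - M t) ≤ LM * ‖s - t‖)
    (hMdotl : ∀ s ∈ S, ∀ t ∈ S, specNorm (Mdot s - Mdot t) ≤ LMdot * ‖s - t‖)
    (hAl : ∀ s ∈ S, ∀ t ∈ S, specNorm (A s - A t) ≤ LA * ‖s - t‖)
    (hBl : ∀ s ∈ S, ∀ t ∈ S, specNorm (B s - B t) ≤ LB * ‖s - t‖)
    (hKl : ∀ s ∈ S, ∀ t ∈ S, specNorm (K s - K t) ≤ LK * ‖s - t‖)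
    (F : E → Matrix (Fin n) (Fin n) ℝ)
    (hF : ∀ s, F s = M s * (A s + B s * K s) + (M s * (A s + B s * K s))ᵀ
        + Mdot s + lam • M s + mu⁻¹ • (M s * Bw * Bwᵀ * M s)) :
    ∀ s ∈ S, ∀ t ∈ S,
      |lambdaMax (F s) - lambdaMax (F t)| ≤
        (LMdot + 2 * (SM * LA + SA * LM + SM * SB * LK + SB * SK * LM + SM * SK * LB
          + (lam / 2) * LM + mu⁻¹ * SM * LM * SBw ^ 2)) * ‖s - t‖ :=
  prop1_first_inequality_lipschitz_general n m l E S lam mu hlam hmu M Mdot A B K Bw SM SA SB SK SBw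
    LM LMdot LA LB LK hMb hAb hBb hKb hBw hMl hMdotl hAl hBl hKl F hF
end

section
/- Let E be a real normed vector space, S ⊆ E, and let F : E → (n×n real symmetric matrices) be such that the scalar function s ↦ λ_max(F(s)) is Lipschitz on S with constant L ≥ 0. Let τ > 0 and let G ⊆ S be a set of grid points such that every s ∈ S is within distance τ of some point of G. If λ_max(F(g)) < −L·τ for every g ∈ G, then F(s) is negative definite (i.e., vᵀF(s)v < 0 for all nonzero v ∈ ℝ^n) for every s ∈ S. -/
open Matrix Set

/-- Grid-based verification corollary (Section 3.3 of the paper): if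
`s ↦ λ_max(F(s))` is `L`-Lipschitz on `S`, every point of `S` is within `τ` of a
grid point of `G ⊆ S`, and `λ_max(F(g)) < -Lτ` on the grid, then `F(s)` is
negative definite for every `s ∈ S`. -/
theorem grid_verification_negative_definite
    (n : ℕ) (hn : 0 < n)
    (E : Type*) [NormedAddCommGroup E] [NormedSpace ℝ E]
    (S G : Set E) (hGS : G ⊆ S)
    (F : E → Matrix (Fin n) (Fin n) ℝ) (hFsymm : ∀ s, (F s).IsSymm)
    (L τ : ℝ) (hL : 0 ≤ L) (hτ : 0 < τ)
    (hLip : ∀ s ∈ S, ∀ t ∈ S, |lambdaMax (F s) - lambdaMax (F t)| ≤ L * ‖s - t‖)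
    (hcover : ∀ s ∈ S, ∃ g ∈ G, ‖s - g‖ ≤ τ)
    (hneg : ∀ g ∈ G, lambdaMax (F g) < -(L * τ)) :
    ∀ s ∈ S, ∀ v : Fin n → ℝ, v ≠ 0 → v ⬝ᵥ (F s *ᵥ v) < 0 := by
  intro s hs v hv
  obtain ⟨g, hg, hdist⟩ := hcover s hs
  have hlt : lambdaMax (F s) < 0 := by
    have h1 := (abs_le.mp (hLip s hs g (hGS hg))).2
    have h2 := hneg g hg
    have h3 : L * ‖s - g‖ ≤ L * τ := mul_le_mul_of_nonneg_left hdist hL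
    linarith
  set A := F s with hA
  -- v ⬝ᵥ v > 0
  have hvv : (0:ℝ) < v ⬝ᵥ v := by
    obtain ⟨i, hi⟩ := Function.ne_iff.mp hv
    have hi' : v i ≠ 0 := hi
    exact Finset.sum_pos' (fun j _ => mul_self_nonneg _)
      ⟨i, Finset.mem_univ i, mul_self_pos.mpr hi'⟩
  set c := Real.sqrt (v ⬝ᵥ v) with hc
  have hcpos : 0 < c := Real.sqrt_pos.mpr hvv
  have hc2 : c * c = v ⬝ᵥ v := Real.mul_self_sqrt hvv.le
  set u := c⁻¹ • v with hu
  have huu : euclNorm u = 1 := by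
    have : u ⬝ᵥ u = 1 := by
      rw [hu, smul_dotProduct, dotProduct_smul, smul_eq_mul, smul_eq_mul, ← hc2]
      field_simp
    rw [euclNorm, this, Real.sqrt_one]
  -- bounded above
  have hbdd : BddAbove {r : ℝ | ∃ w : Fin n → ℝ, euclNorm w = 1 ∧ r = w ⬝ᵥ (A *ᵥ w)} := by
    refine ⟨∑ i, ∑ j, |A i j|, ?_⟩
    rintro r ⟨w, hw, rfl⟩
    have h0 : 0 ≤ w ⬝ᵥ w := Finset.sum_nonneg fun i _ => mul_self_nonneg _
    have hww : w ⬝ᵥ w = 1 := by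
      have hsq := Real.sq_sqrt h0
      rw [euclNorm] at hw
      nlinarith [hw, hsq]
    have habs : ∀ i, |w i| ≤ 1 := by
      intro i
      have h1 : w i * w i ≤ w ⬝ᵥ w :=
        Finset.single_le_sum (fun j _ => mul_self_nonneg (w j)) (Finset.mem_univ i)
      rw [hww] at h1
      nlinarith [abs_nonneg (w i), abs_mul_abs_self (w i)]
    calc w ⬝ᵥ (A *ᵥ w) = ∑ i, ∑ j, w i * (A i j * w j) := by
          simp [dotProduct, mulVec, Finset.mul_sum]
      _ ≤ ∑ i, ∑ j, |A i j| := by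
          refine Finset.sum_le_sum fun i _ => Finset.sum_le_sum fun j _ => ?_
          calc w i * (A i j * w j) ≤ |w i * (A i j * w j)| := le_abs_self _
            _ = |w i| * |A i j| * |w j| := by rw [abs_mul, abs_mul]; ring
            _ ≤ 1 * |A i j| * 1 :=
                mul_le_mul (mul_le_mul_of_nonneg_right (habs i) (abs_nonneg _))
                  (habs j) (abs_nonneg _) (by positivity)
            _ = |A i j| := by ring
  have hmem : u ⬝ᵥ (A *ᵥ u) ∈ {r : ℝ | ∃ w : Fin n → ℝ, euclNorm w = 1 ∧ r = w ⬝ᵥ (A *ᵥ w)} :=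
    ⟨u, huu, rfl⟩
  have hule : u ⬝ᵥ (A *ᵥ u) ≤ lambdaMax A := le_csSup hbdd hmem
  have hrel : u ⬝ᵥ (A *ᵥ u) = c⁻¹ * (c⁻¹ * (v ⬝ᵥ (A *ᵥ v))) := by
    rw [hu, mulVec_smul, smul_dotProduct, dotProduct_smul, smul_eq_mul, smul_eq_mul]
  have huneg : u ⬝ᵥ (A *ᵥ u) < 0 := lt_of_le_of_lt hule hlt
  rw [hrel] at huneg
  have hcinv : 0 < c⁻¹ := inv_pos.mpr hcpos
  nlinarith [huneg, mul_pos hcinv hcinv]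
end
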